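/- arXiv:math/0012170 — 2 statements merged into one kernel-verified Lean document; each statement's English description precedes it below -/
import Mathlib

section
/- Every infinite maximal almost disjoint family of infinite subsets of ω has cardinality at least 𝔟, the bounding number. (In cardinal-invariant notation: 𝔟 ≤ 𝔞.) -/
open Filter

/-- `f <* g` : eventual domination. -/
def EvDom (f g : ℕ → ℕ) : Prop := ∀ᶠ n in Filter.atTop, f n < g n

/-- The bounding number `𝔟`: the least cardinality of a `<*`-unbounded family. -/
noncomputable def boundingNumber : Cardinal :=
  sInf {c : Cardinal | ∃ F : Set (ℕ → ℕ),
    (∀ g : ℕ → ℕ, ∃ f ∈ F, ¬ EvDom f g) ∧ c = Cardinal.mk F}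

/-- Every infinite maximal almost disjoint family of infinite subsets of `ω`
has cardinality at least `𝔟`. -/
theorem bounding_le_mad (𝒜 : Set (Set ℕ))
    (hinf : ∀ A ∈ 𝒜, A.Infinite)
    (had : ∀ A ∈ 𝒜, ∀ B ∈ 𝒜, A ≠ B → (A ∩ B).Finite)
    (h𝒜inf : 𝒜.Infinite)
    (hmax : ∀ X : Set ℕ, X.Infinite → (∀ A ∈ 𝒜, (X ∩ A).Finite) → X ∈ 𝒜) :
    boundingNumber ≤ Cardinal.mk 𝒜 := by
  classical
  -- a countable sequence of distinct members of 𝒜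
  set e : ℕ ↪ ↥𝒜 := h𝒜inf.natEmbedding
  set As : ℕ → Set ℕ := fun n => (e n : Set ℕ) with hAs
  have hAmem : ∀ n, As n ∈ 𝒜 := fun n => (e n).2
  have hAinj : Function.Injective As :=
    fun n m h => e.injective (Subtype.ext h)
  -- the function associated to each member of 𝒜
  set f : Set ℕ → ℕ → ℕ := fun B n =>
    if h : (B ∩ As n).Finite then h.toFinset.sup id else 0 with hf
  set F : Set (ℕ → ℕ) := Set.range (fun B : ↥𝒜 => f ↑B) with hF
  have hunb : ∀ g : ℕ → ℕ, ∃ u ∈ F, ¬ EvDom u g := by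
    intro g
    by_contra hcon
    push_neg at hcon
    have hg : ∀ B : ↥𝒜, EvDom (f ↑B) g := fun B => hcon _ ⟨B, rfl⟩
    -- diagonal set
    have hSinf : ∀ n, (As n \ ⋃ m ∈ Finset.range n, As m).Infinite := by
      intro n
      have hT : (⋃ m ∈ Finset.range n, (As n ∩ As m)).Finite :=
        Set.Finite.biUnion (Finset.range n).finite_toSet
          (fun m hm => had _ (hAmem n) _ (hAmem m)
            (fun h => (Finset.mem_range.mp hm).ne' (hAinj h)))
      have := ((hinf _ (hAmem n)).diff hT)
      refine this.mono ?_
      intro x hx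
      refine ⟨hx.1, ?_⟩
      intro hxU
      simp only [Set.mem_iUnion] at hxU
      obtain ⟨m, hm, hxm⟩ := hxU
      exact hx.2 (Set.mem_iUnion.mpr ⟨m, Set.mem_iUnion.mpr ⟨hm, ⟨hx.1, hxm⟩⟩⟩)
    choose x hxS hxgt using fun n => (hSinf n).exists_gt (g n)
    have hxA : ∀ n, x n ∈ As n := fun n => (hxS n).1
    have hxnot : ∀ {m n : ℕ}, m < n → x n ∉ As m := by
      intro m n hmn hx
      exact (hxS n).2 (Set.mem_iUnion.mpr ⟨m, Set.mem_iUnion.mpr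
        ⟨Finset.mem_range.mpr hmn, hx⟩⟩)
    have hxinj : Function.Injective x := by
      intro n m h
      by_contra hne
      rcases lt_or_gt_of_ne hne with hlt | hlt
      · exact hxnot hlt (h ▸ hxA n)
      · exact hxnot hlt (h ▸ hxA m)
    set X : Set ℕ := Set.range x with hX
    have hXinf : X.Infinite := Set.infinite_range_of_injective hxinj
    have key : ∀ B ∈ 𝒜, (X ∩ B).Finite := by
      intro B hB
      by_cases hBA : ∃ m, B = As m
      · obtain ⟨m, rfl⟩ := hBA
        refine ((Set.finite_Iic m).image x).subset ?_
        rintro y ⟨⟨n, rfl⟩, hyB⟩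
        refine ⟨n, ?_, rfl⟩
        by_contra hn
        exact hxnot (lt_of_not_ge hn) hyB
      · push_neg at hBA
        have hBf : ∀ n, (B ∩ As n).Finite :=
          fun n => had _ hB _ (hAmem n) (hBA n)
        obtain ⟨N, hN⟩ := Filter.eventually_atTop.mp (hg ⟨B, hB⟩)
        refine ((Set.finite_Iio N).image x).subset ?_
        rintro y ⟨⟨n, rfl⟩, hyB⟩
        refine ⟨n, ?_, rfl⟩
        by_contra hn
        have hnN : N ≤ n := le_of_not_gt hn
        have hmem : x n ∈ (hBf n).toFinset :=
          (hBf n).mem_toFinset.mpr ⟨hyB, hxA n⟩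
        have h1 : x n ≤ f B n := by
          rw [hf]
          simp only [dif_pos (hBf n)]
          exact Finset.le_sup (f := id) hmem
        have h2 : f B n < g n := hN n hnN
        exact absurd (hxgt n) (not_lt.mpr (le_of_lt (lt_of_le_of_lt h1 h2)))
    have hXmem : X ∈ 𝒜 := hmax X hXinf key
    have : (X ∩ X).Finite := key X hXmem
    rw [Set.inter_self] at this
    exact hXinf this
  calc boundingNumber ≤ Cardinal.mk F := by
        refine csInf_le ?_ ⟨F, hunb, rfl⟩
        exact ⟨0, fun c _ => zero_le⟩
    _ ≤ Cardinal.mk 𝒜 := Cardinal.mk_range_le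
end

section
/- Let λ be an infinite cardinal, L₀⁺ a linear order isomorphic to λ, L₀⁻ a linear order anti-isomorphic to λ (disjoint from L₀⁺), L₀ = L₀⁻ + L₀⁺, and let 𝐉 be the linear order of finite sequences from L₀ ordered as in Shelah's construction (η <_𝐉 ν iff with n the split point: |η| = n and ν(n) ∈ L₀⁺, or |ν| = n and η(n) ∈ L₀⁻, or both longer and η(n) <_{L₀} ν(n)). Then every nonempty open interval (s, t)_𝐉 with s <_𝐉 t has cardinality exactly λ; in particular 𝐉 is dense in itself. -/
/-- The order `<_𝐉` on finite sequences from a linear order `L` partitioned into an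
initial segment `Lneg = L₀⁻` and the complementary final segment `L₀⁺ = Lnegᶜ`:
`η <_𝐉 ν` iff, with `n` the length of the longest common initial segment, either
`η` ends at `n` and `ν(n) ∈ L₀⁺`, or `ν` ends at `n` and `η(n) ∈ L₀⁻`, or both
continue and `η(n) < ν(n)` in `L`. -/
def JLt {L : Type*} [LinearOrder L] (Lneg : Set L) (η ν : List L) : Prop :=
  ∃ n : ℕ, η.take n = ν.take n ∧
    ((η.length = n ∧ ∃ h : n < ν.length, ν.get ⟨n, h⟩ ∉ Lneg) ∨
     (ν.length = n ∧ ∃ h : n < η.length, η.get ⟨n, h⟩ ∈ Lneg) ∨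
     (∃ h1 : n < η.length, ∃ h2 : n < ν.length, η.get ⟨n, h1⟩ < ν.get ⟨n, h2⟩))

/-- Appending an element of `Lneg` moves a sequence down. -/
lemma JLt_concat_neg {L : Type*} [LinearOrder L] (Lneg : Set L) (t : List L) {b : L}
    (hb : b ∈ Lneg) : JLt Lneg (t ++ [b]) t := by
  refine ⟨t.length, by simp, Or.inr (Or.inl ⟨rfl, by simp, ?_⟩)⟩
  simpa [List.get_eq_getElem] using hb

/-- Appending an element of `Lnegᶜ` moves a sequence up. -/
lemma JLt_concat_pos {L : Type*} [LinearOrder L] (Lneg : Set L) (s : List L) {a : L}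
    (ha : a ∉ Lneg) : JLt Lneg s (s ++ [a]) := by
  refine ⟨s.length, by simp, Or.inl ⟨rfl, by simp, ?_⟩⟩
  simpa [List.get_eq_getElem] using ha

/-- If `L₀⁺` is order-isomorphic to the infinite cardinal `λ` and `L₀⁻` is
anti-isomorphic to `λ`, then in `𝐉 = (List L₀, <_𝐉)` every nonempty open interval
has cardinality exactly `λ`; in particular `𝐉` is dense in itself. -/
theorem JLt_interval_card {L : Type*} [LinearOrder L]
    (lam : Cardinal) (hlam : Cardinal.aleph0 ≤ lam)
    (Lneg : Set L)
    (hdown : ∀ a ∈ Lneg, ∀ b : L, b ≤ a → b ∈ Lneg)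
    (eneg : Lneg ≃o ((Cardinal.ord lam).ToType)ᵒᵈ)
    (epos : (Lnegᶜ : Set L) ≃o (Cardinal.ord lam).ToType)
    (s t : List L) (hst : JLt Lneg s t) :
    Cardinal.mk {x : List L // JLt Lneg s x ∧ JLt Lneg x t} = lam := by
  have hLneg : Cardinal.mk Lneg = lam :=
    (Cardinal.mk_congr (eneg.toEquiv.trans OrderDual.ofDual)).trans
      (Cardinal.mk_ord_toType lam)
  have hLpos : Cardinal.mk (Lnegᶜ : Set L) = lam :=
    (Cardinal.mk_congr epos.toEquiv).trans (Cardinal.mk_ord_toType lam)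
  have hne : Nonempty L := by
    have : Cardinal.mk Lneg ≠ 0 := by
      rw [hLneg]; exact (lt_of_lt_of_le Cardinal.aleph0_pos hlam).ne'
    obtain ⟨⟨x, _⟩⟩ := Cardinal.mk_ne_zero_iff.mp this
    exact ⟨x⟩
  have hL : Cardinal.mk L ≤ lam := by
    rw [← Cardinal.mk_sum_compl Lneg, hLneg, hLpos, Cardinal.add_eq_self hlam]
  refine le_antisymm ?_ ?_
  · calc Cardinal.mk {x : List L // JLt Lneg s x ∧ JLt Lneg x t}
        ≤ Cardinal.mk (List L) := Cardinal.mk_subtype_le _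
      _ = max (Cardinal.mk L) Cardinal.aleph0 := Cardinal.mk_list_eq_max_mk_aleph0 L
      _ ≤ lam := max_le hL hlam
  · obtain ⟨n, hpre, hcase⟩ := hst
    rcases hcase with h1 | h2 | h3
    · -- s ends at n, t(n) ∉ Lneg: use t ++ [b] for b ∈ Lneg
      obtain ⟨hs, ht, hmem⟩ := h1
      rw [← hLneg]
      refine Cardinal.mk_le_of_injective (f := fun b : Lneg =>
        (⟨t ++ [b.1], ?_, JLt_concat_neg Lneg t b.2⟩ :
          {x : List L // JLt Lneg s x ∧ JLt Lneg x t})) ?_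
      · refine ⟨n, ?_, Or.inl ⟨hs, ?_, ?_⟩⟩
        · rw [List.take_append_of_le_length ht.le, hpre]
        · simp; omega
        · simpa [List.get_eq_getElem, List.getElem_append_left ht] using hmem
      · intro a b hab
        have := congrArg Subtype.val hab
        simp only [List.append_cancel_left_eq, List.cons.injEq] at this
        exact Subtype.ext this.1
    · -- t ends at n, s(n) ∈ Lneg: use s ++ [a] for a ∈ Lnegᶜ
      obtain ⟨ht, hs, hmem⟩ := h2
      rw [← hLpos]
      refine Cardinal.mk_le_of_injective (f := fun a : (Lnegᶜ : Set L) =>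
        (⟨s ++ [a.1], JLt_concat_pos Lneg s a.2, ?_⟩ :
          {x : List L // JLt Lneg s x ∧ JLt Lneg x t})) ?_
      · refine ⟨n, ?_, Or.inr (Or.inl ⟨ht, ?_, ?_⟩)⟩
        · rw [List.take_append_of_le_length hs.le, hpre]
        · simp; omega
        · simpa [List.get_eq_getElem, List.getElem_append_left hs] using hmem
      · intro a b hab
        have := congrArg Subtype.val hab
        simp only [List.append_cancel_left_eq, List.cons.injEq] at this
        exact Subtype.ext this.1
    · -- both continue, s(n) < t(n): use t ++ [b] for b ∈ Lneg
      obtain ⟨hs, ht, hlt⟩ := h3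
      rw [← hLneg]
      refine Cardinal.mk_le_of_injective (f := fun b : Lneg =>
        (⟨t ++ [b.1], ?_, JLt_concat_neg Lneg t b.2⟩ :
          {x : List L // JLt Lneg s x ∧ JLt Lneg x t})) ?_
      · refine ⟨n, ?_, Or.inr (Or.inr ⟨hs, ?_, ?_⟩)⟩
        · rw [List.take_append_of_le_length ht.le, hpre]
        · simp; omega
        · simpa [List.get_eq_getElem, List.getElem_append_left ht] using hlt
      · intro a b hab
        have := congrArg Subtype.val hab
        simp only [List.append_cancel_left_eq, List.cons.injEq] at this
        exact Subtype.ext this.1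
end
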